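/- arXiv:2603.15063 — 2 statements merged into one kernel-verified Lean document; each statement's English description precedes it below -/
import Mathlib

section
/- Let ℐ = C ⊕ [±Δ] be a square interval matrix of size p×p (Δ ≥ 0 entrywise) and let ℳ be a matrix zonotope of size p×q. Then for every j ≥ 1, the set ℐ^j ℳ = {I^j N : I ∈ ℐ, N ∈ ℳ} is contained in 𝕋_ℐ^j(ℳ), the j-fold iterate of the operator 𝕋_ℐ applied to ℳ (at each step 𝕋_ℐ is applied to the zonotope representation produced by the previous step). -/
/-!
Write `N ∈ ⟨M; G₁,…,G_g⟩` as `N = M + Y` with `Y = Σ βᵢ Gᵢ`, `|βᵢ| ≤ 1`, and `I ∈ C ⊕ [±Δ]` as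
`I = C + D` with `|D| ≤ Δ`. Then `IN = CM + Σ βᵢ (CGᵢ) + DN`. Entrywise `|N| ≤ |M| + Σ |Gᵢ|`, hence
`|DN| ≤ Δ (|M| + Σ |Gᵢ|) = F`, so `DN` is a combination of the single-entry matrices `F⁽ᵏ⁾` with
coefficients `(DN)ₖ / Fₖ ∈ [-1, 1]`. This gives `ℐ ℳ ⊆ 𝕋_ℐ(ℳ)`, and the theorem follows by induction
on `j` from `I^(j+1) N = I (I^j N)`.
-/

open Matrix Finset Pointwise

noncomputable section

/-- entrywise absolute value of a real matrix -/
def matAbs {ι κ : Type*} (M : Matrix ι κ ℝ) : Matrix ι κ ℝ := fun i j => |M i j|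

/-- interval matrix `C ⊕ [±Δ] = {C + D : |D| ≤ Δ}` -/
def intervalMat {ι κ : Type*} (C Δ : Matrix ι κ ℝ) : Set (Matrix ι κ ℝ) :=
  {X | ∀ i j, |X i j - C i j| ≤ Δ i j}

/-- representation of a matrix zonotope: a center and a list of generators -/
structure ZRep (ι κ : Type*) where
  c : Matrix ι κ ℝ
  g : List (Matrix ι κ ℝ)

/-- the set of matrices described by a matrix zonotope representation -/
def ZRep.set {ι κ : Type*} (Z : ZRep ι κ) : Set (Matrix ι κ ℝ) :=
  {X | ∃ β : Fin Z.g.length → ℝ, (∀ i, |β i| ≤ 1) ∧ X = Z.c + ∑ i, β i • Z.g.get i}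

/-- interval hull `box(⟨M;G⟩) = M ⊕ [± Σ |G_i|]` of a matrix zonotope -/
def ZRep.box {ι κ : Type*} (Z : ZRep ι κ) : Set (Matrix ι κ ℝ) :=
  intervalMat Z.c ((Z.g.map matAbs).sum)

/-- the family `E(F)` of single-entry matrices, as a list -/
def EList {ι κ : Type*} [Fintype ι] [Fintype κ] [DecidableEq ι] [DecidableEq κ]
    (F : Matrix ι κ ℝ) : List (Matrix ι κ ℝ) :=
  (Finset.univ : Finset (ι × κ)).toList.map fun p => Matrix.single p.1 p.2 (F p.1 p.2)

/-- the operator `𝕋_ℐ` (for `ℐ = C ⊕ [±Δ]`) acting on zonotope representations: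
`𝕋_ℐ(⟨M;G₁,…,G_g⟩) = ⟨CM; CG₁,…,CG_g, E(Δ(|M|+Σ|G_i|))⟩` -/
def Tstep {ι κ μ : Type*} [Fintype ι] [Fintype κ] [Fintype μ] [DecidableEq ι] [DecidableEq μ]
    (C Δ : Matrix ι κ ℝ) (Z : ZRep κ μ) : ZRep ι μ :=
  ⟨C * Z.c, Z.g.map (fun G => C * G) ++ EList (Δ * (matAbs Z.c + (Z.g.map matAbs).sum))⟩

def boundedCombos {M : Type*} [AddCommMonoid M] [Module ℝ M] (l : List M) : Set M :=
  {x | ∃ β : Fin l.length → ℝ, (∀ i, |β i| ≤ 1) ∧ x = ∑ i, β i • l.get i}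

section boundedCombos

variable {M N : Type*} [AddCommGroup M] [Module ℝ M] [AddCommGroup N] [Module ℝ N]

theorem mem_boundedCombos_nil {x : M} : x ∈ boundedCombos ([] : List M) ↔ x = 0 := by
  simp [boundedCombos]

theorem mem_boundedCombos_cons {a x : M} {l : List M} :
    x ∈ boundedCombos (a :: l) ↔ ∃ t : ℝ, |t| ≤ 1 ∧ ∃ y ∈ boundedCombos l, x = t • a + y := by
  constructor
  · rintro ⟨β, hβ, rfl⟩
    exact ⟨β 0, hβ 0, _, ⟨Fin.tail β, fun i => hβ i.succ, rfl⟩, by simp [Fin.sum_univ_succ, Fin.tail]⟩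
  · rintro ⟨t, ht, _, ⟨β, hβ, rfl⟩, rfl⟩
    refine ⟨Fin.cons t β, Fin.cases ht hβ, ?_⟩
    simp [Fin.sum_univ_succ]

theorem add_mem_boundedCombos_append {x y : M} {l₁ l₂ : List M}
    (hx : x ∈ boundedCombos l₁) (hy : y ∈ boundedCombos l₂) :
    x + y ∈ boundedCombos (l₁ ++ l₂) := by
  induction l₁ generalizing x with
  | nil => rwa [mem_boundedCombos_nil.mp hx, zero_add]
  | cons a l₁ ih =>
    obtain ⟨t, ht, x', hx', rfl⟩ := mem_boundedCombos_cons.mp hx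
    exact mem_boundedCombos_cons.mpr ⟨t, ht, x' + y, ih hx', add_assoc _ _ _⟩

theorem map_mem_boundedCombos_map (f : M →ₗ[ℝ] N) {x : M} {l : List M}
    (hx : x ∈ boundedCombos l) : f x ∈ boundedCombos (l.map f) := by
  induction l generalizing x with
  | nil => simp [mem_boundedCombos_nil.mp hx, mem_boundedCombos_nil]
  | cons a l ih =>
    obtain ⟨t, ht, y, hy, rfl⟩ := mem_boundedCombos_cons.mp hx
    exact mem_boundedCombos_cons.mpr ⟨t, ht, f y, ih hy, by simp⟩

theorem sum_map_smul_mem_boundedCombos {α : Type*} (l : List α) (f : α → M) {g : α → ℝ}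
    (hg : ∀ a ∈ l, |g a| ≤ 1) : (l.map fun a => g a • f a).sum ∈ boundedCombos (l.map f) := by
  induction l with
  | nil => simp [mem_boundedCombos_nil]
  | cons a l ih =>
    exact mem_boundedCombos_cons.mpr
      ⟨g a, hg a (by simp), _, ih fun b hb => hg b (by simp [hb]), by simp⟩

end boundedCombos

section Matrix

variable {ι κ μ : Type*}

theorem ZRep.mem_set_iff {Z : ZRep ι κ} {X : Matrix ι κ ℝ} :
    X ∈ Z.set ↔ X - Z.c ∈ boundedCombos Z.g :=
  exists_congr fun _ => and_congr_right' sub_eq_iff_eq_add'.symm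

theorem abs_apply_le_sum_abs_of_mem_boundedCombos {l : List (Matrix ι κ ℝ)} {X : Matrix ι κ ℝ}
    (hX : X ∈ boundedCombos l) (i : ι) (j : κ) : |X i j| ≤ (l.map matAbs).sum i j := by
  induction l generalizing X with
  | nil => simp [mem_boundedCombos_nil.mp hX]
  | cons a l ih =>
    obtain ⟨t, ht, Y, hY, rfl⟩ := mem_boundedCombos_cons.mp hX
    calc |t * a i j + Y i j| ≤ |t| * |a i j| + |Y i j| := by
          simpa only [abs_mul] using abs_add_le (t * a i j) (Y i j)
      _ ≤ 1 * |a i j| + (l.map matAbs).sum i j := by gcongr; exact ih hY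
      _ = ((a :: l).map matAbs).sum i j := by simp [matAbs]

theorem ZRep.set_subset_box (Z : ZRep ι κ) : Z.set ⊆ Z.box := fun _ hX =>
  abs_apply_le_sum_abs_of_mem_boundedCombos (ZRep.mem_set_iff.mp hX)

theorem ZRep.abs_apply_le_of_mem_set {Z : ZRep ι κ} {N : Matrix ι κ ℝ} (hN : N ∈ Z.set)
    (i : ι) (j : κ) : |N i j| ≤ (matAbs Z.c + (Z.g.map matAbs).sum) i j := by
  have := abs_sub_abs_le_abs_sub (N i j) (Z.c i j)
  have := Z.set_subset_box hN i j
  simp only [Matrix.add_apply, matAbs]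
  linarith

theorem abs_mul_apply_le [Fintype κ] {A A' : Matrix ι κ ℝ} {B B' : Matrix κ μ ℝ}
    (hA : ∀ i k, |A i k| ≤ A' i k) (hB : ∀ k j, |B k j| ≤ B' k j) (i : ι) (j : μ) :
    |(A * B) i j| ≤ (A' * B') i j := by
  simp only [Matrix.mul_apply]
  refine (Finset.abs_sum_le_sum_abs _ _).trans (Finset.sum_le_sum fun k _ => ?_)
  rw [abs_mul]
  exact mul_le_mul (hA i k) (hB k j) (abs_nonneg _) ((abs_nonneg _).trans (hA i k))

theorem mem_boundedCombos_EList [Fintype ι] [Fintype κ] [DecidableEq ι] [DecidableEq κ]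
    {F X : Matrix ι κ ℝ} (hX : ∀ i j, |X i j| ≤ F i j) : X ∈ boundedCombos (EList F) := by
  -- the coefficient of `single i j (F i j)` is `X i j / F i j`, which is `0` when `F i j = 0`
  have hcoef : ∀ p : ι × κ, (X p.1 p.2 / F p.1 p.2) • single p.1 p.2 (F p.1 p.2) =
      single p.1 p.2 (X p.1 p.2) := fun p => by
    rw [smul_single, smul_eq_mul, div_mul_cancel_of_imp fun h => abs_nonpos_iff.mp (h ▸ hX _ _)]
  have hsum : (Finset.univ.toList.map fun p : ι × κ =>
      (X p.1 p.2 / F p.1 p.2) • single p.1 p.2 (F p.1 p.2)).sum = X := by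
    rw [Finset.sum_map_toList]
    simp only [hcoef]
    exact (Fintype.sum_prod_type' fun i j => single i j (X i j)).trans
      (matrix_eq_sum_single X).symm
  rw [← hsum]
  refine sum_map_smul_mem_boundedCombos _ _ fun p _ => ?_
  rw [abs_div]
  exact div_le_one_of_le₀ ((hX _ _).trans (le_abs_self _)) (abs_nonneg _)

end Matrix

theorem mul_mem_Tstep_set {ι κ μ : Type*} [Fintype ι] [Fintype κ] [Fintype μ] [DecidableEq ι]
    [DecidableEq μ] {C Δ I : Matrix ι κ ℝ} {Z : ZRep κ μ} {N : Matrix κ μ ℝ}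
    (hI : I ∈ intervalMat C Δ) (hN : N ∈ Z.set) : I * N ∈ (Tstep C Δ Z).set := by
  have hsplit : I * N - C * Z.c = C * (N - Z.c) + (I - C) * N := by
    simp only [Matrix.mul_sub, Matrix.sub_mul]; abel
  rw [ZRep.mem_set_iff]
  dsimp only [Tstep]
  rw [hsplit]
  exact add_mem_boundedCombos_append
    (map_mem_boundedCombos_map (mulLeftLinearMap μ ℝ C) (ZRep.mem_set_iff.mp hN))
    (mem_boundedCombos_EList (abs_mul_apply_le hI (ZRep.abs_apply_le_of_mem_set hN)))

theorem stmt1_general {p q : ℕ} (C Δ : Matrix (Fin p) (Fin p) ℝ)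
    (Z : ZRep (Fin p) (Fin q)) :
    ∀ j : ℕ, 1 ≤ j →
      {X : Matrix (Fin p) (Fin q) ℝ | ∃ I ∈ intervalMat C Δ, ∃ N ∈ Z.set, X = I ^ j * N} ⊆
        ((Tstep C Δ)^[j] Z).set := by
  intro j hj
  induction j, hj using Nat.le_induction with
  | base =>
    rintro _ ⟨I, hI, N, hN, rfl⟩
    rw [pow_one]
    exact mul_mem_Tstep_set hI hN
  | succ n _ ih =>
    rintro _ ⟨I, hI, N, hN, rfl⟩
    rw [pow_succ', Matrix.mul_assoc, Function.iterate_succ_apply']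
    exact mul_mem_Tstep_set hI (ih ⟨I, hI, N, hN, rfl⟩)

/-- `ℐ^j ℳ ⊆ 𝕋_ℐ^j(ℳ)` for every `j ≥ 1`. -/
theorem stmt1 {p q : ℕ} (C Δ : Matrix (Fin p) (Fin p) ℝ) (hΔ : ∀ i j, 0 ≤ Δ i j)
    (Z : ZRep (Fin p) (Fin q)) :
    ∀ j : ℕ, 1 ≤ j →
      {X : Matrix (Fin p) (Fin q) ℝ | ∃ I ∈ intervalMat C Δ, ∃ N ∈ Z.set, X = I ^ j * N} ⊆
        ((Tstep C Δ)^[j] Z).set :=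
  stmt1_general C Δ Z
end
end

section
/- Recursive feasibility (Theorem 1): in the setting of the feasibility problem below, suppose (N, z(·), v(·)) with N ≥ 1 is feasible at x ∈ ℝ^n. Then for every A ∈ ℝ^{n×n}, B ∈ ℝ^{n×m} with |[A B] − [Â B̂]| ≤ Δ_S entrywise and every w ∈ 𝒲, setting x⁺ = Ax + Bv(0) + w, there exist N⁺ ≥ 1 and sequences (z⁺(·), v⁺(·)) feasible at x⁺. -/
open Matrix Finset Pointwise

noncomputable section

/-- a vector of `ℝ^n` viewed as a column matrix -/
def colVec {n : ℕ} (w : Fin n → ℝ) : Matrix (Fin n) (Fin 1) ℝ := fun i _ => w i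

/-- the set `𝒜_K = {Â_K + D[Iₙ; K] : |D| ≤ Δ_S}` -/
def AKset {n m : ℕ} (AhK : Matrix (Fin n) (Fin n) ℝ) (K : Matrix (Fin m) (Fin n) ℝ)
    (ΔS : Matrix (Fin n) (Fin n ⊕ Fin m) ℝ) : Set (Matrix (Fin n) (Fin n) ℝ) :=
  {X | ∃ D ∈ intervalMat 0 ΔS, X = AhK + D * Matrix.fromRows 1 K}

/-- `ℐ^Δ(j) = [± Σ_{i=0}^{j} |Â_K^{j−i}| F_i]` -/
def IDelta {n m : ℕ} (AhK : Matrix (Fin n) (Fin n) ℝ)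
    (FΔ : ℕ → Matrix (Fin n) (Fin n ⊕ Fin m) ℝ) (j : ℕ) :
    Set (Matrix (Fin n) (Fin n ⊕ Fin m) ℝ) :=
  intervalMat 0 (∑ i ∈ Finset.range (j + 1), matAbs (AhK ^ (j - i)) * FΔ i)

/-- `ℐ^𝒲(j) = [± Σ_{i=0}^{j} |Â_K^{j−i}| F^𝒲_i]`, a set of (column) vectors of `ℝ^n` -/
def IWvec {n : ℕ} (AhK : Matrix (Fin n) (Fin n) ℝ)
    (FW : ℕ → Matrix (Fin n) (Fin 1) ℝ) (j : ℕ) : Set (Matrix (Fin n) (Fin 1) ℝ) :=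
  intervalMat 0 (∑ i ∈ Finset.range (j + 1), matAbs (AhK ^ (j - i)) * FW i)

/-- the tube `ℬ(j) = Σ_{i<j} ℐ^Δ(j−i−1)[z(i); v(i)] ⊕ Σ_{i<j} ℐ^𝒲(i)` -/
def Btube {n m : ℕ} (AhK : Matrix (Fin n) (Fin n) ℝ)
    (FΔ : ℕ → Matrix (Fin n) (Fin n ⊕ Fin m) ℝ) (FW : ℕ → Matrix (Fin n) (Fin 1) ℝ)
    (z : ℕ → Matrix (Fin n) (Fin 1) ℝ) (v : ℕ → Matrix (Fin m) (Fin 1) ℝ) (j : ℕ) :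
    Set (Matrix (Fin n) (Fin 1) ℝ) :=
  (∑ i ∈ Finset.range j,
    (fun D => D * Matrix.fromRows (z i) (v i)) '' IDelta AhK FΔ (j - i - 1)) +
  ∑ i ∈ Finset.range j, IWvec AhK FW i

/-- feasibility of `(N, z(·), v(·))` at `x` for the variable-horizon robust control problem -/
def Feasible {n m : ℕ} (Ah : Matrix (Fin n) (Fin n) ℝ) (Bh : Matrix (Fin n) (Fin m) ℝ)
    (K : Matrix (Fin m) (Fin n) ℝ)
    (FΔ : ℕ → Matrix (Fin n) (Fin n ⊕ Fin m) ℝ) (FW : ℕ → Matrix (Fin n) (Fin 1) ℝ)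
    (X : Set (Matrix (Fin n) (Fin 1) ℝ)) (U : Set (Matrix (Fin m) (Fin 1) ℝ))
    (Xf : Set (Matrix (Fin n) (Fin 1) ℝ)) (x : Matrix (Fin n) (Fin 1) ℝ) (N : ℕ)
    (z : ℕ → Matrix (Fin n) (Fin 1) ℝ) (v : ℕ → Matrix (Fin m) (Fin 1) ℝ) : Prop :=
  1 ≤ N ∧ z 0 = x ∧
  (∀ j < N, z (j + 1) = Ah * z j + Bh * v j) ∧
  (∀ j ≤ N, {z j} + Btube (Ah + Bh * K) FΔ FW z v j ⊆ X) ∧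
  (∀ j < N, {v j} + (fun e => K * e) '' Btube (Ah + Bh * K) FΔ FW z v j ⊆ U) ∧
  {z N} + Btube (Ah + Bh * K) FΔ FW z v N ⊆ Xf

/-!
Write the true successor state as `x⁺ = z(1) + e` with `e = D [z(0); v(0)] + w`,
`|D| ≤ Δ_S`, so that `e ∈ ℬ(1)`. If `N = 1` then `x⁺ ∈ 𝒳_f`, and the terminal controller
`u = Kx` is a feasible plan of horizon 1 by robust positive invariance. Otherwise shift the
plan and correct it by the nominal closed-loop response to `e`:
`z⁺(t) = z(t+1) + Â_K^t e`, `v⁺(t) = v(t+1) + K Â_K^t e`.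

Every tube is an interval box, `ℬ(j) = [± r(j)]` with
`r(j) = Σ_{i<j} R^Δ(j-i-1) |[z(i); v(i)]| + Σ_{i<j} R^𝒲(i)`. The correction enlarges
`|[z(t+1); v(t+1)]|` by at most `[Iₙ; |K|] |Â_K^t| q`, where
`q = r(1) = Δ_S |[z(0); v(0)]| + w̄` bounds `|e|`, and the identity
`|Â_K^j| q + Σ_{t<j} R^Δ(j-t-1) [Iₙ; |K|] |Â_K^t| q = R^Δ(j) |[z(0); v(0)]| + R^𝒲(j)`
(both sides solve `X(j) = |Â_K^j| q + Σ_{k<j} |Â_K^(j-k-1)| Δ_K X(k)`) says exactly that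
`{Â_K^j e} ⊕ ℬ⁺(j) ⊆ ℬ(j+1)`. Hence `{z⁺(j)} ⊕ ℬ⁺(j) ⊆ {z(j+1)} ⊕ ℬ(j+1)`, and the
shifted plan inherits all constraints from the old one.
-/

section Entrywise

variable {ι κ μ : Type*}

lemma matAbs_nonneg (M : Matrix ι κ ℝ) (i : ι) (j : κ) : 0 ≤ matAbs M i j :=
  abs_nonneg _

@[simp]
lemma matAbs_one [DecidableEq ι] : matAbs (1 : Matrix ι ι ℝ) = 1 := by
  ext i j
  by_cases h : i = j <;> simp [matAbs, one_apply, h]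

variable [Fintype κ] {P P' : Matrix ι κ ℝ} {Q Q' : Matrix κ μ ℝ}

lemma mul_apply_nonneg (hP : ∀ i k, 0 ≤ P i k) (hQ : ∀ k j, 0 ≤ Q k j) (i : ι) (j : μ) :
    0 ≤ (P * Q) i j :=
  sum_nonneg fun k _ => mul_nonneg (hP i k) (hQ k j)

lemma mul_apply_le_mul_apply_left (hP : ∀ i k, 0 ≤ P i k) (hQ : ∀ k j, Q k j ≤ Q' k j)
    (i : ι) (j : μ) : (P * Q) i j ≤ (P * Q') i j :=
  sum_le_sum fun k _ => mul_le_mul_of_nonneg_left (hQ k j) (hP i k)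

lemma mul_apply_le_mul_apply_right (hQ : ∀ k j, 0 ≤ Q k j) (hP : ∀ i k, P i k ≤ P' i k)
    (i : ι) (j : μ) : (P * Q) i j ≤ (P' * Q) i j :=
  sum_le_sum fun k _ => mul_le_mul_of_nonneg_right (hP i k) (hQ k j)

lemma abs_mul_apply_le_s15 (P : Matrix ι κ ℝ) (Q : Matrix κ μ ℝ) (i : ι) (j : μ) :
    |(P * Q) i j| ≤ (matAbs P * matAbs Q) i j :=
  (abs_sum_le_sum_abs _ _).trans_eq (by simp [mul_apply, matAbs, abs_mul])

end Entrywise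

section Box

variable {ι κ : Type*}

lemma mem_intervalMat_zero {r y : Matrix ι κ ℝ} :
    y ∈ intervalMat 0 r ↔ ∀ i j, |y i j| ≤ r i j := by
  simp [intervalMat]

lemma intervalMat_zero_zero : intervalMat 0 (0 : Matrix ι κ ℝ) = 0 := by
  ext y
  simp [mem_intervalMat_zero, ← Matrix.ext_iff]

lemma intervalMat_zero_add {a b : Matrix ι κ ℝ} (ha : ∀ i j, 0 ≤ a i j)
    (hb : ∀ i j, 0 ≤ b i j) : intervalMat 0 a + intervalMat 0 b = intervalMat 0 (a + b) := by
  ext y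
  simp only [Set.mem_add, mem_intervalMat_zero]
  constructor
  · rintro ⟨p, hp, q, hq, rfl⟩ i j
    exact (abs_add_le _ _).trans (add_le_add (hp i j) (hq i j))
  · intro hy
    have hsplit : ∀ i j, y i j ∈ Set.Icc (-a i j) (a i j) + Set.Icc (-b i j) (b i j) := by
      intro i j
      rw [Set.Icc_add_Icc (by linarith [ha i j]) (by linarith [hb i j]), ← neg_add,
        Set.mem_Icc, ← abs_le]
      exact hy i j
    choose p hp q hq hpq using hsplit
    exact ⟨of p, fun i j => abs_le.mpr (hp i j), of q, fun i j => abs_le.mpr (hq i j),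
      Matrix.ext hpq⟩

lemma sum_intervalMat_zero {α : Type*} (s : Finset α) {r : α → Matrix ι κ ℝ}
    (hr : ∀ t i j, 0 ≤ r t i j) :
    ∑ t ∈ s, intervalMat 0 (r t) = intervalMat 0 (∑ t ∈ s, r t) := by
  induction s using Finset.cons_induction with
  | empty => simp [intervalMat_zero_zero]
  | cons t s ht ih =>
    rw [sum_cons, sum_cons, ih, intervalMat_zero_add (hr t) fun i j => ?_]
    rw [Matrix.sum_apply]
    exact sum_nonneg fun t _ => hr t i j

lemma image_mul_intervalMat_zero [Fintype κ] {R : Matrix ι κ ℝ} (hR : ∀ i k, 0 ≤ R i k)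
    (u : Matrix κ (Fin 1) ℝ) :
    (fun D => D * u) '' intervalMat 0 R = intervalMat 0 (R * matAbs u) := by
  ext y
  simp only [Set.mem_image, mem_intervalMat_zero]
  have hs := mul_apply_nonneg hR (matAbs_nonneg u)
  constructor
  · rintro ⟨D, hD, rfl⟩ i j
    exact (abs_mul_apply_le_s15 D u i j).trans (mul_apply_le_mul_apply_right (matAbs_nonneg u) hD i j)
  · intro hy
    -- Row `i` of `D` is row `i` of `R`, scaled by `y i 0 / (R |u|) i 0` and signed like `u`;
    -- if `(R |u|) i 0 = 0` then `y i 0 = 0`, and `y i 0 / 0 = 0` gives the zero row.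
    refine ⟨of fun i k => y i 0 / (R * matAbs u) i 0 * R i k * SignType.sign (u k 0),
      fun i k => ?_, ?_⟩
    · have hscale : |y i 0 / (R * matAbs u) i 0| ≤ 1 := by
        rw [abs_div, abs_of_nonneg (hs i 0)]
        exact div_le_one_of_le₀ (hy i 0) (hs i 0)
      have hsign : |(SignType.sign (u k 0) : ℝ)| ≤ 1 := by
        rcases lt_trichotomy (u k 0) 0 with h | h | h <;> simp [h]
      calc |y i 0 / (R * matAbs u) i 0 * R i k * SignType.sign (u k 0)|
          = |y i 0 / (R * matAbs u) i 0| * R i k * |(SignType.sign (u k 0) : ℝ)| := by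
            rw [abs_mul, abs_mul, abs_of_nonneg (hR i k)]
        _ ≤ 1 * R i k * 1 := by gcongr <;> simp [hR i k]
        _ = R i k := by ring
    · ext i j
      obtain rfl : j = 0 := Subsingleton.elim j 0
      have hrow : (of (fun i k => y i 0 / (R * matAbs u) i 0 * R i k * SignType.sign (u k 0))
          * u) i 0 = y i 0 / (R * matAbs u) i 0 * (R * matAbs u) i 0 := by
        simp only [mul_apply, of_apply, mul_sum, matAbs, mul_assoc, sign_mul_self]
      rw [hrow]
      by_cases h0 : (R * matAbs u) i 0 = 0
      · rw [h0, mul_zero, abs_nonpos_iff.mp ((hy i 0).trans_eq h0)]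
      · exact div_mul_cancel₀ _ h0

end Box

section AbsConv

variable {ι κ : Type*} [Fintype ι] [DecidableEq ι]

/-- The common radius of `ℐ^Δ(j) = IDelta M FΔ j` and `ℐ^𝒲(j) = IWvec M FW j`. -/
def absConv (M : Matrix ι ι ℝ) (F : ℕ → Matrix ι κ ℝ) (j : ℕ) : Matrix ι κ ℝ :=
  ∑ i ∈ range (j + 1), matAbs (M ^ (j - i)) * F i

variable {M Δ : Matrix ι ι ℝ} {F : ℕ → Matrix ι κ ℝ}

@[simp]
lemma absConv_zero (F : ℕ → Matrix ι κ ℝ) : absConv M F 0 = F 0 := by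
  simp [absConv]

lemma absConv_nonneg (hF : ∀ t i k, 0 ≤ F t i k) (j : ℕ) (i : ι) (k : κ) :
    0 ≤ absConv M F j i k := by
  rw [absConv, Matrix.sum_apply]
  exact sum_nonneg fun t _ => mul_apply_nonneg (matAbs_nonneg _) (hF t) i k

lemma absConv_mul_add_absConv [Fintype κ] (F : ℕ → Matrix ι κ ℝ)
    (G : ℕ → Matrix ι (Fin 1) ℝ) (u : Matrix κ (Fin 1) ℝ) (j : ℕ) :
    absConv M F j * u + absConv M G j = absConv M (fun t => F t * u + G t) j := by
  simp only [absConv, Matrix.sum_mul, Matrix.mul_add, Matrix.mul_assoc, sum_add_distrib]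

lemma nonneg_of_eq_mul_absConv (hΔ : ∀ i k, 0 ≤ Δ i k) (hF0 : ∀ i k, 0 ≤ F 0 i k)
    (hF : ∀ j, F (j + 1) = Δ * absConv M F j) (j : ℕ) : ∀ i k, 0 ≤ F j i k := by
  induction j using Nat.strong_induction_on with
  | _ j ih =>
    cases j with
    | zero => exact hF0
    | succ j =>
      rw [hF j]
      refine mul_apply_nonneg hΔ fun i k => ?_
      rw [absConv, Matrix.sum_apply]
      exact sum_nonneg fun t ht =>
        mul_apply_nonneg (matAbs_nonneg _) (ih t (by simp at ht; omega)) i k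

lemma absConv_eq_renewal (hF : ∀ j, F (j + 1) = Δ * absConv M F j) (j : ℕ) :
    absConv M F j = matAbs (M ^ j) * F 0 +
      ∑ k ∈ range j, matAbs (M ^ (j - k - 1)) * (Δ * absConv M F k) := by
  rw [absConv, sum_range_succ', Nat.sub_zero, add_comm]
  congr 1
  refine sum_congr rfl fun k _ => ?_
  rw [hF, Nat.sub_succ']

lemma eq_absConv_of_renewal (hF : ∀ j, F (j + 1) = Δ * absConv M F j)
    {X : ℕ → Matrix ι κ ℝ}
    (hX : ∀ j, X j = matAbs (M ^ j) * F 0 +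
      ∑ k ∈ range j, matAbs (M ^ (j - k - 1)) * (Δ * X k)) :
    X = absConv M F := by
  funext j
  induction j using Nat.strong_induction_on with
  | _ j ih =>
    rw [hX, absConv_eq_renewal hF]
    congr 1
    exact sum_congr rfl fun k hk => by rw [ih k (mem_range.mp hk)]

lemma pow_mul_add_sum_absConv_mul_eq_absConv {μ : Type*} [Fintype μ]
    {F : ℕ → Matrix ι μ ℝ} {J : Matrix μ ι ℝ} {G : ℕ → Matrix ι κ ℝ} (hJ : F 0 * J = Δ)
    (hF : ∀ j, F (j + 1) = Δ * absConv M F j) (hG : ∀ j, G (j + 1) = Δ * absConv M G j)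
    (j : ℕ) :
    matAbs (M ^ j) * G 0 + ∑ t ∈ range j, absConv M F (j - t - 1) * (J * (matAbs (M ^ t) * G 0))
      = absConv M G j := by
  set W : ℕ → Matrix μ κ ℝ := fun t => J * (matAbs (M ^ t) * G 0)
  set X : ℕ → Matrix ι κ ℝ := fun j =>
    matAbs (M ^ j) * G 0 + ∑ t ∈ range j, absConv M F (j - t - 1) * W t
  have hconv : ∀ k, ∑ t ∈ range (k + 1), F (k - t) * W t = Δ * X k := by
    intro k
    rw [sum_range_succ, Nat.sub_self, ← Matrix.mul_assoc, hJ, add_comm]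
    simp only [X, Matrix.mul_add, Matrix.mul_sum]
    congr 1
    refine sum_congr rfl fun t ht => ?_
    obtain ⟨l, hl⟩ : ∃ l, k - t = l + 1 := ⟨k - t - 1, by simp at ht; omega⟩
    rw [hl, hF, Matrix.mul_assoc, Nat.add_sub_cancel]
  refine congrFun (eq_absConv_of_renewal hG (X := X) fun j => ?_) j
  simp only [X]
  congr 1
  calc ∑ t ∈ range j, absConv M F (j - t - 1) * W t
      = ∑ t ∈ range j, ∑ l ∈ range (j - t), matAbs (M ^ (j - t - 1 - l)) * (F l * W t) := by
        refine sum_congr rfl fun t ht => ?_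
        rw [absConv, show j - t - 1 + 1 = j - t by simp at ht; omega, Matrix.sum_mul]
        simp only [Matrix.mul_assoc]
    _ = ∑ k ∈ range j, ∑ t ∈ range (k + 1),
          matAbs (M ^ (j - t - 1 - (k - t))) * (F (k - t) * W t) :=
        (sum_range_diag_flip j fun t l => matAbs (M ^ (j - t - 1 - l)) * (F l * W t)).symm
    _ = ∑ k ∈ range j, matAbs (M ^ (j - k - 1)) * (Δ * X k) := by
        refine sum_congr rfl fun k hk => ?_
        rw [← hconv, Matrix.mul_sum]
        refine sum_congr rfl fun t ht => ?_
        rw [show j - t - 1 - (k - t) = j - k - 1 by simp at hk ht; omega]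

end AbsConv

lemma matAbs_fromRows_add_le {ι μ γ : Type*} [Fintype ι] [DecidableEq ι]
    {a d q : Matrix ι γ ℝ} {b : Matrix μ γ ℝ} (K : Matrix μ ι ℝ) (hd : ∀ i c, |d i c| ≤ q i c)
    (i : ι ⊕ μ) (c : γ) :
    matAbs (fromRows (a + d) (b + K * d)) i c ≤
      (matAbs (fromRows a b) + fromRows (1 : Matrix ι ι ℝ) (matAbs K) * q :
        Matrix (ι ⊕ μ) γ ℝ) i c := by
  rcases i with i | i
  · simpa [matAbs, fromRows_mul] using (abs_add_le _ _).trans (add_le_add_right (hd i c) _)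
  · have hK := (abs_mul_apply_le_s15 K d i c).trans
      (mul_apply_le_mul_apply_left (matAbs_nonneg K) hd i c)
    simpa [matAbs, fromRows_mul] using (abs_add_le _ _).trans (add_le_add_right hK _)

lemma mul_fromRows_one_matAbs {ι κ μ : Type*} [Fintype κ] [Fintype μ] [DecidableEq κ]
    (ΔS : Matrix ι (κ ⊕ μ) ℝ) (K : Matrix μ κ ℝ) :
    ΔS * fromRows (1 : Matrix κ κ ℝ) (matAbs K) =
      ΔS.submatrix id Sum.inl + ΔS.submatrix id Sum.inr * matAbs K := by
  rw [← fromCols_toCols ΔS, fromCols_mul_fromRows, Matrix.mul_one]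
  rfl

lemma fromRows_one_matAbs_nonneg {ι μ : Type*} [DecidableEq ι] (K : Matrix μ ι ℝ) :
    ∀ i j, 0 ≤ fromRows (1 : Matrix ι ι ℝ) (matAbs K) i j := by
  rintro (i | i) j
  · by_cases h : i = j <;> simp [one_apply, h]
  · exact matAbs_nonneg K i j

section Tube

variable {n m : ℕ} {M Δ : Matrix (Fin n) (Fin n) ℝ} {K : Matrix (Fin m) (Fin n) ℝ}
  {FΔ : ℕ → Matrix (Fin n) (Fin n ⊕ Fin m) ℝ} {FW : ℕ → Matrix (Fin n) (Fin 1) ℝ}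
  {z : ℕ → Matrix (Fin n) (Fin 1) ℝ} {v : ℕ → Matrix (Fin m) (Fin 1) ℝ}
  {e : Matrix (Fin n) (Fin 1) ℝ}

def tubeRadius (M : Matrix (Fin n) (Fin n) ℝ) (FΔ : ℕ → Matrix (Fin n) (Fin n ⊕ Fin m) ℝ)
    (FW : ℕ → Matrix (Fin n) (Fin 1) ℝ) (z : ℕ → Matrix (Fin n) (Fin 1) ℝ)
    (v : ℕ → Matrix (Fin m) (Fin 1) ℝ) (j : ℕ) : Matrix (Fin n) (Fin 1) ℝ :=
  ∑ i ∈ range j, absConv M FΔ (j - i - 1) * matAbs (fromRows (z i) (v i)) +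
    ∑ i ∈ range j, absConv M FW i

@[simp]
lemma Btube_zero : Btube M FΔ FW z v 0 = 0 := by
  simp [Btube]

lemma Btube_one : Btube M FΔ FW z v 1 =
    (fun D => D * fromRows (z 0) (v 0)) '' intervalMat 0 (FΔ 0) + intervalMat 0 (FW 0) := by
  simp [Btube, IDelta, IWvec]

lemma Btube_eq_intervalMat (hFΔ : ∀ j i k, 0 ≤ FΔ j i k) (hFW : ∀ j i k, 0 ≤ FW j i k)
    (j : ℕ) : Btube M FΔ FW z v j = intervalMat 0 (tubeRadius M FΔ FW z v j) := by
  have hD : ∀ t, (fun D => D * fromRows (z t) (v t)) '' IDelta M FΔ (j - t - 1) =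
      intervalMat 0 (absConv M FΔ (j - t - 1) * matAbs (fromRows (z t) (v t))) :=
    fun t => image_mul_intervalMat_zero (absConv_nonneg hFΔ _) _
  have hW : ∀ t, IWvec M FW t = intervalMat 0 (absConv M FW t) := fun _ => rfl
  rw [Btube, tubeRadius, sum_congr rfl fun t _ => hD t, sum_congr rfl fun t _ => hW t,
    sum_intervalMat_zero _ fun t => mul_apply_nonneg (absConv_nonneg hFΔ _) (matAbs_nonneg _),
    sum_intervalMat_zero _ fun t => absConv_nonneg hFW t, intervalMat_zero_add]
  · intro i c
    rw [Matrix.sum_apply]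
    exact sum_nonneg fun t _ => mul_apply_nonneg (absConv_nonneg hFΔ _) (matAbs_nonneg _) i c
  · intro i c
    rw [Matrix.sum_apply]
    exact sum_nonneg fun t _ => absConv_nonneg hFW t i c

lemma abs_pow_mul_apply_add_tubeRadius_shift_le (hFΔnn : ∀ j i k, 0 ≤ FΔ j i k)
    (hJ : FΔ 0 * fromRows (1 : Matrix (Fin n) (Fin n) ℝ) (matAbs K) = Δ)
    (hFΔ : ∀ j, FΔ (j + 1) = Δ * absConv M FΔ j)
    (hFW : ∀ j, FW (j + 1) = Δ * absConv M FW j)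
    (he : ∀ i c, |e i c| ≤ tubeRadius M FΔ FW z v 1 i c) (j : ℕ) (i : Fin n) (c : Fin 1) :
    |(M ^ j * e : Matrix _ _ ℝ) i c| + tubeRadius M FΔ FW (fun t => z (t + 1) + M ^ t * e)
        (fun t => v (t + 1) + K * (M ^ t * e)) j i c ≤ tubeRadius M FΔ FW z v (j + 1) i c := by
  set u := matAbs (fromRows (z 0) (v 0))
  set G : ℕ → Matrix (Fin n) (Fin 1) ℝ := fun t => FΔ t * u + FW t
  have hG : ∀ j, G (j + 1) = Δ * absConv M G j := fun j => by
    simp only [G, ← absConv_mul_add_absConv, hFΔ, hFW, Matrix.mul_assoc, Matrix.mul_add]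
  have hpow : ∀ t i c, |(M ^ t * e : Matrix _ _ ℝ) i c| ≤
      (matAbs (M ^ t) * G 0 : Matrix _ _ ℝ) i c := fun t i c =>
    (abs_mul_apply_le_s15 _ _ i c).trans (mul_apply_le_mul_apply_left (matAbs_nonneg _)
      (fun i c => by simpa [matAbs, tubeRadius, G] using he i c) i c)
  have hsucc : tubeRadius M FΔ FW z v (j + 1) =
      ∑ t ∈ range j, absConv M FΔ (j - t - 1) * matAbs (fromRows (z (t + 1)) (v (t + 1))) +
        absConv M G j + ∑ t ∈ range j, absConv M FW t := by
    rw [tubeRadius, sum_range_succ', sum_range_succ (fun t => absConv M FW t),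
      ← absConv_mul_add_absConv]
    simp only [Nat.add_sub_add_right, Nat.sub_zero, Nat.add_sub_cancel, u]
    abel
  have hshift : tubeRadius M FΔ FW (fun t => z (t + 1) + M ^ t * e)
        (fun t => v (t + 1) + K * (M ^ t * e)) j i c ≤
      (∑ t ∈ range j, absConv M FΔ (j - t - 1) * matAbs (fromRows (z (t + 1)) (v (t + 1))) +
        ∑ t ∈ range j, absConv M FΔ (j - t - 1) *
          (fromRows (1 : Matrix (Fin n) (Fin n) ℝ) (matAbs K) * (matAbs (M ^ t) * G 0)) +
        ∑ t ∈ range j, absConv M FW t : Matrix (Fin n) (Fin 1) ℝ) i c := by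
    simp only [tubeRadius, Matrix.add_apply, Matrix.sum_apply, ← sum_add_distrib]
    gcongr with t
    refine (mul_apply_le_mul_apply_left (absConv_nonneg hFΔnn _)
      (matAbs_fromRows_add_le K (hpow t)) i c).trans_eq ?_
    rw [Matrix.mul_add, Matrix.add_apply]
  rw [hsucc, ← pow_mul_add_sum_absConv_mul_eq_absConv hJ hFΔ hG j]
  simp only [Matrix.add_apply] at hshift ⊢
  linarith [hpow j i c]

lemma singleton_pow_mul_add_Btube_shift_subset (hFΔnn : ∀ j i k, 0 ≤ FΔ j i k)
    (hFWnn : ∀ j i k, 0 ≤ FW j i k)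
    (hJ : FΔ 0 * fromRows (1 : Matrix (Fin n) (Fin n) ℝ) (matAbs K) = Δ)
    (hFΔ : ∀ j, FΔ (j + 1) = Δ * absConv M FΔ j)
    (hFW : ∀ j, FW (j + 1) = Δ * absConv M FW j)
    (he : e ∈ Btube M FΔ FW z v 1) (j : ℕ) :
    {M ^ j * e} + Btube M FΔ FW (fun t => z (t + 1) + M ^ t * e)
        (fun t => v (t + 1) + K * (M ^ t * e)) j ⊆ Btube M FΔ FW z v (j + 1) := by
  simp only [Btube_eq_intervalMat hFΔnn hFWnn, mem_intervalMat_zero] at he ⊢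
  rintro _ ⟨_, rfl, b, hb, rfl⟩
  rw [mem_intervalMat_zero] at hb ⊢
  intro i c
  calc |(M ^ j * e + b) i c| ≤ |(M ^ j * e : Matrix _ _ ℝ) i c| + |b i c| := abs_add_le _ _
    _ ≤ |(M ^ j * e : Matrix _ _ ℝ) i c| + tubeRadius M FΔ FW (fun t => z (t + 1) + M ^ t * e)
        (fun t => v (t + 1) + K * (M ^ t * e)) j i c := by gcongr; exact hb i c
    _ ≤ _ := abs_pow_mul_apply_add_tubeRadius_shift_le hFΔnn hJ hFΔ hFW he j i c

end Tube

lemma add_mul_fromRows_one_mem_AKset {n m : ℕ} {M : Matrix (Fin n) (Fin n) ℝ}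
    {K : Matrix (Fin m) (Fin n) ℝ} {ΔS D : Matrix (Fin n) (Fin n ⊕ Fin m) ℝ}
    (hD : D ∈ intervalMat 0 ΔS) :
    M + D * fromRows (1 : Matrix (Fin n) (Fin n) ℝ) K ∈ AKset M K ΔS :=
  ⟨D, hD, rfl⟩

section Feasibility

variable {n m : ℕ} {Ah : Matrix (Fin n) (Fin n) ℝ} {Bh : Matrix (Fin n) (Fin m) ℝ}
  {K : Matrix (Fin m) (Fin n) ℝ} {FΔ : ℕ → Matrix (Fin n) (Fin n ⊕ Fin m) ℝ}
  {FW : ℕ → Matrix (Fin n) (Fin 1) ℝ} {X Xf : Set (Matrix (Fin n) (Fin 1) ℝ)}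
  {U : Set (Matrix (Fin m) (Fin 1) ℝ)}

lemma feasible_of_mem_terminal {ΔS : Matrix (Fin n) (Fin n ⊕ Fin m) ℝ} {wbar : Fin n → ℝ}
    (hFΔ0 : FΔ 0 = ΔS) (hFW0 : FW 0 = colVec wbar) (hXfX : Xf ⊆ X)
    (hKXf : (fun x => K * x) '' Xf ⊆ U)
    (hRPI : ∀ x ∈ Xf, ∀ Am ∈ AKset (Ah + Bh * K) K ΔS,
      ∀ w ∈ intervalMat 0 (colVec wbar), Am * x + w ∈ Xf)
    {y : Matrix (Fin n) (Fin 1) ℝ} (hy : y ∈ Xf) :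
    Feasible Ah Bh K FΔ FW X U Xf y 1 (fun t => (Ah + Bh * K) ^ t * y)
      (fun t => K * ((Ah + Bh * K) ^ t * y)) := by
  have hterm : {(Ah + Bh * K) ^ 1 * y} +
      Btube (Ah + Bh * K) FΔ FW (fun t => (Ah + Bh * K) ^ t * y)
        (fun t => K * ((Ah + Bh * K) ^ t * y)) 1 ⊆ Xf := by
    rw [Btube_one, hFΔ0, hFW0]
    rintro _ ⟨_, rfl, _, ⟨_, ⟨D, hD, rfl⟩, w, hw, rfl⟩, rfl⟩
    convert hRPI y hy _ (add_mul_fromRows_one_mem_AKset hD) w hw using 1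
    have hD1 : D * fromRows (1 : Matrix (Fin n) (Fin n) ℝ) K * y = D * fromRows y (K * y) := by
      rw [Matrix.mul_assoc, fromRows_mul, Matrix.one_mul]
    simp only [pow_one, pow_zero, Matrix.one_mul, Matrix.add_mul, hD1]
    abel
  refine ⟨le_rfl, by simp, fun j hj => ?_, fun j hj => ?_, fun j hj => ?_, hterm⟩
  · obtain rfl : j = 0 := by omega
    simp [Matrix.add_mul, Matrix.mul_assoc]
  · interval_cases j
    · simpa using hXfX hy
    · exact hterm.trans hXfX
  · obtain rfl : j = 0 := by omega
    simpa using hKXf ⟨y, hy, rfl⟩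

lemma feasible_shift {Δ : Matrix (Fin n) (Fin n) ℝ} {x e : Matrix (Fin n) (Fin 1) ℝ} {N : ℕ}
    {z : ℕ → Matrix (Fin n) (Fin 1) ℝ} {v : ℕ → Matrix (Fin m) (Fin 1) ℝ}
    (hfeas : Feasible Ah Bh K FΔ FW X U Xf x N z v) (hN : 2 ≤ N)
    (hFΔnn : ∀ j i k, 0 ≤ FΔ j i k) (hFWnn : ∀ j i k, 0 ≤ FW j i k)
    (hJ : FΔ 0 * fromRows (1 : Matrix (Fin n) (Fin n) ℝ) (matAbs K) = Δ)
    (hFΔ : ∀ j, FΔ (j + 1) = Δ * absConv (Ah + Bh * K) FΔ j)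
    (hFW : ∀ j, FW (j + 1) = Δ * absConv (Ah + Bh * K) FW j)
    (he : e ∈ Btube (Ah + Bh * K) FΔ FW z v 1) :
    Feasible Ah Bh K FΔ FW X U Xf (z 1 + e) (N - 1)
      (fun t => z (t + 1) + (Ah + Bh * K) ^ t * e)
      (fun t => v (t + 1) + K * ((Ah + Bh * K) ^ t * e)) := by
  obtain ⟨N, rfl⟩ : ∃ k, N = k + 1 := ⟨N - 1, by omega⟩
  rw [Nat.add_sub_cancel]
  obtain ⟨-, -, hdyn, hstate, hinput, hterm⟩ := hfeas
  have hsub := singleton_pow_mul_add_Btube_shift_subset (K := K) hFΔnn hFWnn hJ hFΔ hFW he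
  have hstep : ∀ j, {z (j + 1) + (Ah + Bh * K) ^ j * e} +
      Btube (Ah + Bh * K) FΔ FW (fun t => z (t + 1) + (Ah + Bh * K) ^ t * e)
        (fun t => v (t + 1) + K * ((Ah + Bh * K) ^ t * e)) j ⊆
      {z (j + 1)} + Btube (Ah + Bh * K) FΔ FW z v (j + 1) := fun j => by
    rw [← Set.singleton_add_singleton, add_assoc]
    exact Set.add_subset_add_left (hsub j)
  refine ⟨by omega, by simp, fun j hj => ?_, fun j hj => (hstep j).trans (hstate _ (by omega)),
    fun j hj => ?_, ?_⟩
  · simp only [hdyn (j + 1) (by omega), pow_succ', Matrix.mul_assoc, Matrix.add_mul,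
      Matrix.mul_add]
    abel
  · refine subset_trans ?_ (hinput (j + 1) (by omega))
    rintro _ ⟨_, rfl, _, ⟨b, hb, rfl⟩, rfl⟩
    exact ⟨v (j + 1), rfl, _, ⟨_, hsub j ⟨_, rfl, b, hb, rfl⟩, rfl⟩, by
      simp only [Matrix.mul_add, add_assoc]⟩
  · exact (hstep N).trans hterm

end Feasibility

/-- Theorem 1, recursive feasibility. -/
theorem stmt15 {n m : ℕ}
    (Ah : Matrix (Fin n) (Fin n) ℝ) (Bh : Matrix (Fin n) (Fin m) ℝ)
    (K : Matrix (Fin m) (Fin n) ℝ)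
    (ΔS : Matrix (Fin n) (Fin n ⊕ Fin m) ℝ) (hΔS : ∀ i j, 0 ≤ ΔS i j)
    (wbar : Fin n → ℝ) (hwbar : ∀ i, 0 ≤ wbar i)
    (FΔ : ℕ → Matrix (Fin n) (Fin n ⊕ Fin m) ℝ) (hFΔ0 : FΔ 0 = ΔS)
    (hFΔ : ∀ j, FΔ (j + 1) =
      (ΔS.submatrix id Sum.inl + ΔS.submatrix id Sum.inr * matAbs K) *
        ∑ i ∈ Finset.range (j + 1), matAbs ((Ah + Bh * K) ^ (j - i)) * FΔ i)
    (FW : ℕ → Matrix (Fin n) (Fin 1) ℝ) (hFW0 : FW 0 = colVec wbar)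
    (hFW : ∀ j, FW (j + 1) =
      (ΔS.submatrix id Sum.inl + ΔS.submatrix id Sum.inr * matAbs K) *
        ∑ i ∈ Finset.range (j + 1), matAbs ((Ah + Bh * K) ^ (j - i)) * FW i)
    (X : Set (Matrix (Fin n) (Fin 1) ℝ)) (U : Set (Matrix (Fin m) (Fin 1) ℝ))
    (Xf : Set (Matrix (Fin n) (Fin 1) ℝ))
    (hXfX : Xf ⊆ X) (hKXf : (fun x => K * x) '' Xf ⊆ U)
    (hRPI : ∀ x ∈ Xf, ∀ Am ∈ AKset (Ah + Bh * K) K ΔS,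
      ∀ w ∈ intervalMat 0 (colVec wbar), Am * x + w ∈ Xf)
    (x : Matrix (Fin n) (Fin 1) ℝ) (N : ℕ)
    (z : ℕ → Matrix (Fin n) (Fin 1) ℝ) (v : ℕ → Matrix (Fin m) (Fin 1) ℝ)
    (hfeas : Feasible Ah Bh K FΔ FW X U Xf x N z v) :
    ∀ (A : Matrix (Fin n) (Fin n) ℝ) (B : Matrix (Fin n) (Fin m) ℝ),
      (∀ i j, |Matrix.fromCols A B i j - Matrix.fromCols Ah Bh i j| ≤ ΔS i j) →
      ∀ w ∈ intervalMat 0 (colVec wbar),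
        ∃ (N' : ℕ) (z' : ℕ → Matrix (Fin n) (Fin 1) ℝ) (v' : ℕ → Matrix (Fin m) (Fin 1) ℝ),
          Feasible Ah Bh K FΔ FW X U Xf (A * x + B * v 0 + w) N' z' v' := by
  intro A B hAB w hw
  have ⟨hN, hz0, hdyn, _, _, hterm⟩ := hfeas
  have hJ : FΔ 0 * fromRows (1 : Matrix (Fin n) (Fin n) ℝ) (matAbs K) =
      ΔS.submatrix id Sum.inl + ΔS.submatrix id Sum.inr * matAbs K := by
    rw [hFΔ0, mul_fromRows_one_matAbs]
  have hΔK := hJ ▸ mul_apply_nonneg (hFΔ0 ▸ hΔS) (fromRows_one_matAbs_nonneg K)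
  have hFΔnn := nonneg_of_eq_mul_absConv hΔK (hFΔ0 ▸ hΔS) hFΔ
  have hFWnn := nonneg_of_eq_mul_absConv hΔK (hFW0 ▸ fun i _ => hwbar i) hFW
  set e := fromCols (A - Ah) (B - Bh) * fromRows (z 0) (v 0) + w
  have he : e ∈ Btube (Ah + Bh * K) FΔ FW z v 1 := by
    rw [Btube_one, hFΔ0, hFW0]
    refine Set.add_mem_add ⟨_, fun i j => ?_, rfl⟩ hw
    rcases j with j | j
    · simpa using hAB i (.inl j)
    · simpa using hAB i (.inr j)
  have hx : A * x + B * v 0 + w = z 1 + e := by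
    simp only [e, hdyn 0 hN, hz0, fromCols_mul_fromRows, Matrix.sub_mul]
    abel
  rw [hx]
  obtain rfl | hN2 : N = 1 ∨ 2 ≤ N := by omega
  · exact ⟨1, _, _, feasible_of_mem_terminal hFΔ0 hFW0 hXfX hKXf hRPI
      (hterm ⟨_, rfl, e, he, rfl⟩)⟩
  · exact ⟨N - 1, _, _, feasible_shift hfeas hN2 hFΔnn hFWnn hJ hFΔ hFW he⟩
end
end
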